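/- Let n ≥ 3, let F = ℚ(α) be the field of rational functions over ℚ in an indeterminate α, and in M_α(𝒜_n) over F let u = (1+α(n−2))⁻¹ Σ_{t ∈ T_{n−1}} t. Then the 1-eigenspace of ad(u) is exactly the span of T_{n−1}, and the 0-eigenspace of ad(u) is 1-dimensional. -/

import Mathlib

open Equiv Finsupp

instance {n : ℕ} : DecidablePred (Equiv.Perm.IsSwap : Equiv.Perm (Fin n) → Prop) := by
  intro σ; unfold Equiv.Perm.IsSwap; infer_instance

abbrev Tr (n : ℕ) : Type := {σ : Equiv.Perm (Fin (n + 1)) // σ.IsSwap}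

/-- Two transpositions are collinear when their supports share exactly one point. -/
def Coll {n : ℕ} (s t : Tr n) : Prop :=
  (s.1.support ∩ t.1.support).card = 1

instance {n : ℕ} (s t : Tr n) : Decidable (Coll s t) := by
  unfold Coll; infer_instance

/-- The third point `s·t·s` of the line through collinear transpositions. -/
def wedge {n : ℕ} (s t : Tr n) : Tr n :=
  ⟨s.1 * t.1 * s.1, by
    obtain ⟨x, y, hxy, ht⟩ := t.2
    obtain ⟨a, b, hab, hs⟩ := s.2
    have hinv : s.1⁻¹ = s.1 := by rw [hs]; exact Equiv.swap_inv a b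
    exact ⟨s.1 x, s.1 y, fun h => hxy (s.1.injective h), by
      rw [ht, Equiv.swap_apply_apply, hinv]⟩⟩

variable (F : Type*) [Field F]

/-- Product of two basis points of the Matsuo algebra of the Fischer
space `𝒜_n` of `Sym(n+1)`. -/
noncomputable def pointMul {n : ℕ} (α : F) (s t : Tr n) : Tr n →₀ F :=
  if s = t then Finsupp.single s 1
  else if Coll s t then
    (α / 2) • (Finsupp.single s 1 + Finsupp.single t 1 - Finsupp.single (wedge s t) 1)
  else 0

/-- The multiplication of the Matsuo algebra `M_α(𝒜_n)`, as a bilinear map on the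
free module on the transpositions of `Sym(n+1)`. -/
noncomputable def matsuoMul (n : ℕ) (α : F) :
    (Tr n →₀ F) →ₗ[F] (Tr n →₀ F) →ₗ[F] (Tr n →₀ F) :=
  Finsupp.lsum F fun s =>
    LinearMap.toSpanSingleton F _
      (Finsupp.lsum F fun t => LinearMap.toSpanSingleton F _ (pointMul F α s t))


/-- The identity element `(1 + α(n-2))⁻¹ ∑_{t ∈ T_{n-1}} t` of the parabolic subalgebra
of `M_α(𝒜_n)` spanned by the transpositions fixing the last point (i.e. with support
contained in `{1, …, n}`), over the rational function field `ℚ(α)`. -/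
noncomputable def idParab (n : ℕ) : Tr n →₀ RatFunc ℚ :=
  (1 + RatFunc.X * ((n : RatFunc ℚ) - 2))⁻¹ •
    ∑ t ∈ Finset.univ.filter (fun t : Tr n => t.1 (Fin.last n) = Fin.last n),
      Finsupp.single t (1 : RatFunc ℚ)

/-!
Let `p` be the last point, `P` the transpositions fixing `p` and `Q` the `n` transpositions
`(b p)`. Since `u` is the identity of the subalgebra spanned by `P`, `ad(u)` fixes `span P`
pointwise. A transposition of `P` collinear with `(x p)` is some `(x c)`, and their product only
involves `(x c)`, `(x p)` and `(c p)`; hence the `Q`-coordinates of `u·f` depend only on those of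
`f`, through `k (n I - J)` with `k = α / (2 (1 + α (n - 2)))`, a multiple of the Laplacian of the
complete graph on `Q`. So `ad(u)` is block triangular with diagonal blocks `id` and `k L`. As
`k n ≠ 1`, `1` is not an eigenvalue of `k L` and the `1`-eigenspace of `ad(u)` is `span P`; for
`μ ≠ 1` the projection to the `Q`-coordinates maps the `μ`-eigenspace of `ad(u)` isomorphically
onto that of `k L`, and the kernel of `L` is spanned by the all-ones vector.
-/

open Finset

section BlockTriangular

variable {M N : Type*} [AddCommGroup M] [AddCommGroup N]

lemma eigenspace_one_eq_ker_of_comp_eq {R : Type*} [CommRing R] [Module R M] [Module R N]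
    {T : Module.End R M} {B : Module.End R N} {π : M →ₗ[R] N} (hπ : π ∘ₗ T = B ∘ₗ π)
    (hT : ∀ x, π x = 0 → T x = x) (hB : B.eigenspace 1 = ⊥) :
    T.eigenspace 1 = LinearMap.ker π := by
  refine le_antisymm (fun x hx => ?_) fun x hx => ?_
  · rw [Module.End.mem_eigenspace_iff, one_smul] at hx
    have hπx : π x ∈ B.eigenspace 1 := by
      rw [Module.End.mem_eigenspace_iff, one_smul, ← LinearMap.comp_apply, ← hπ,
        LinearMap.comp_apply, hx]
    rwa [hB, Submodule.mem_bot] at hπx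
  · rw [Module.End.mem_eigenspace_iff, one_smul]
    exact hT x hx

lemma finrank_eigenspace_eq_of_comp_eq {K : Type*} [Field K] [Module K M] [Module K N]
    {T : Module.End K M} {B : Module.End K N} {π : M →ₗ[K] N} (hπ : π ∘ₗ T = B ∘ₗ π)
    (hT : ∀ x, π x = 0 → T x = x) (hsurj : Function.Surjective π) {μ : K} (hμ : μ ≠ 1) :
    Module.finrank K (T.eigenspace μ) = Module.finrank K (B.eigenspace μ) := by
  have hπT (x : M) : π (T x) = B (π x) := LinearMap.congr_fun hπ x
  have hmaps : ∀ x ∈ T.eigenspace μ, π x ∈ B.eigenspace μ := by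
    intro x hx
    rw [Module.End.mem_eigenspace_iff] at hx ⊢
    rw [← hπT, hx, map_smul]
  refine (LinearEquiv.ofBijective (π.restrict hmaps) ⟨?_, ?_⟩).finrank_eq
  · rw [← LinearMap.ker_eq_bot, eq_bot_iff]
    rintro ⟨x, hx⟩ h
    rw [LinearMap.mem_ker, Subtype.ext_iff] at h
    rw [Module.End.mem_eigenspace_iff, hT x h] at hx
    have : (1 - μ) • x = 0 := by rw [sub_smul, one_smul, ← hx, sub_self]
    simpa [sub_ne_zero.2 hμ.symm] using this
  · rintro ⟨v, hv⟩
    obtain ⟨m, rfl⟩ := hsurj v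
    rw [Module.End.mem_eigenspace_iff, ← hπT] at hv
    have hw : π (T m - μ • m) = 0 := by rw [map_sub, map_smul, hv, sub_self]
    have h1μ : (1 - μ)⁻¹ * (1 - μ) = 1 := inv_mul_cancel₀ (sub_ne_zero.2 hμ.symm)
    -- `(T - μ) m` lies in `ker π`, where `T` is the identity, so correcting `m` by
    -- `(1 - μ)⁻¹` times it gives a `μ`-eigenvector with the same image.
    refine ⟨⟨m - (1 - μ)⁻¹ • (T m - μ • m), ?_⟩, Subtype.ext ?_⟩
    · rw [Module.End.mem_eigenspace_iff, map_sub, map_smul, hT _ hw]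
      linear_combination (norm := module) (-h1μ) • (T m - μ • m)
    · simp [LinearMap.restrict_apply, hw]

end BlockTriangular

def completeLaplacian (ι : Type*) [Fintype ι] : Module.End F (ι → F) where
  toFun v i := Fintype.card ι * v i - ∑ j, v j
  map_add' v w := by ext i; simp [sum_add_distrib]; ring
  map_smul' c v := by ext i; simp [← Finset.mul_sum]; ring

@[simp]
lemma completeLaplacian_apply {ι : Type*} [Fintype ι] (v : ι → F) (i : ι) :
    completeLaplacian F ι v i = Fintype.card ι * v i - ∑ j, v j := rfl

section CompleteLaplacian

variable {F} {ι : Type*} [Fintype ι]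

lemma eigenspace_smul_completeLaplacian_one {k : F} (hk : k * Fintype.card ι ≠ 1) :
    (k • completeLaplacian F ι).eigenspace 1 = ⊥ := by
  rw [eq_bot_iff]
  intro v hv
  rw [Module.End.mem_eigenspace_iff, one_smul] at hv
  have hvi (i : ι) : k * (Fintype.card ι * v i - ∑ j, v j) = v i := by
    simpa using congrFun hv i
  have hsum : ∑ j, v j = 0 := by
    rw [← Finset.sum_congr rfl fun i _ => hvi i, ← Finset.mul_sum, Finset.sum_sub_distrib,
      ← Finset.mul_sum, Finset.sum_const, Finset.card_univ, nsmul_eq_mul, sub_self, mul_zero]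
  ext i
  have := hvi i
  rw [hsum, sub_zero, ← mul_assoc] at this
  have : (1 - k * Fintype.card ι) * v i = 0 := by linear_combination -this
  simpa [sub_ne_zero.2 hk.symm] using this

lemma finrank_ker_completeLaplacian (h : (Fintype.card ι : F) ≠ 0) :
    Module.finrank F (LinearMap.ker (completeLaplacian F ι)) = 1 := by
  have : Nonempty ι := Fintype.card_pos_iff.1 (Nat.pos_of_ne_zero fun hc => h (by simp [hc]))
  suffices LinearMap.ker (completeLaplacian F ι) = F ∙ 1 by
    rw [this, finrank_span_singleton one_ne_zero]
  refine le_antisymm (fun v hv => ?_) ?_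
  · rw [LinearMap.mem_ker] at hv
    rw [Submodule.mem_span_singleton]
    refine ⟨(∑ j, v j) / Fintype.card ι, funext fun i => ?_⟩
    have := congrFun hv i
    simp only [completeLaplacian_apply, Pi.zero_apply] at this
    simp only [Pi.smul_apply, Pi.one_apply, smul_eq_mul, mul_one]
    field_simp
    linear_combination -this
  · rw [Submodule.span_le, Set.singleton_subset_iff, SetLike.mem_coe, LinearMap.mem_ker]
    ext i
    simp

end CompleteLaplacian

lemma RatFunc.C_add_X_mul_C_ne_zero {K : Type*} [CommRing K] [IsDomain K] {a : K} (ha : a ≠ 0)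
    (b : K) :
    RatFunc.C a + RatFunc.X * RatFunc.C b ≠ 0 := by
  rw [← RatFunc.algebraMap_C, ← RatFunc.algebraMap_C, ← RatFunc.algebraMap_X, ← map_mul,
    ← map_add, map_ne_zero_iff _ (RatFunc.algebraMap_injective K)]
  intro h
  exact ha (by simpa using congrArg (Polynomial.coeff · 0) h)

namespace Tr

variable {n : ℕ}

def mk (a b : Fin (n + 1)) (h : a ≠ b) : Tr n := ⟨swap a b, a, b, h, rfl⟩

@[simp]
lemma coe_mk (a b : Fin (n + 1)) (h : a ≠ b) : (mk a b h).1 = swap a b := rfl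

lemma exists_eq_mk (t : Tr n) : ∃ (x y : Fin (n + 1)) (h : x ≠ y), t = mk x y h := by
  obtain ⟨x, y, h, ht⟩ := t.2
  exact ⟨x, y, h, Subtype.ext ht⟩

lemma mk_comm (a b : Fin (n + 1)) (h : a ≠ b) : mk a b h = mk b a h.symm :=
  Subtype.ext (swap_comm a b)

lemma apply_apply (t : Tr n) (a : Fin (n + 1)) : t.1 (t.1 a) = a := by
  obtain ⟨x, y, -, ht⟩ := t.2
  rw [ht, swap_apply_self]

lemma mk_apply_eq_self_iff {x y p : Fin (n + 1)} (h : x ≠ y) :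
    (mk x y h).1 p = p ↔ p ≠ x ∧ p ≠ y := by
  have := swap_apply_ne_self_iff (a := x) (b := y) (x := p)
  rw [coe_mk]
  tauto

lemma eq_mk_of_apply_ne {t : Tr n} {a : Fin (n + 1)} (h : t.1 a ≠ a) :
    t = mk a (t.1 a) h.symm := by
  obtain ⟨x, y, hxy, ht⟩ := t.2
  apply Subtype.ext
  change t.1 = swap a (t.1 a)
  rw [ht] at h ⊢
  rcases eq_or_ne a x with rfl | hx
  · rw [swap_apply_left]
  rcases eq_or_ne a y with rfl | hy
  · rw [swap_apply_right, swap_comm]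
  · exact absurd (swap_apply_of_ne_of_ne hx hy) h

lemma eq_mk_of_apply_ne' {t : Tr n} {p : Fin (n + 1)} (h : t.1 p ≠ p) :
    t = mk (t.1 p) p h := by
  rw [mk_comm]
  exact eq_mk_of_apply_ne h

lemma mk_left_inj {a b p : Fin (n + 1)} (ha : a ≠ p) (hb : b ≠ p) :
    mk a p ha = mk b p hb ↔ a = b := by
  refine ⟨fun h => ?_, fun h => by subst h; rfl⟩
  have := congrArg (fun t : Tr n => t.1 a) h
  simp only [coe_mk, swap_apply_left] at this
  by_contra hab
  exact ha (this.trans (swap_apply_of_ne_of_ne hab ha)).symm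

lemma coll_mk_iff (t : Tr n) {x y : Fin (n + 1)} (h : x ≠ y) :
    Coll t (mk x y h) ↔ t.1 x ≠ x ∧ t.1 y = y ∨ t.1 x = x ∧ t.1 y ≠ y := by
  unfold Coll
  rw [coe_mk, Perm.support_swap h]
  by_cases hx : t.1 x = x <;> by_cases hy : t.1 y = y <;>
    simp [Finset.inter_insert_of_mem, Finset.inter_insert_of_notMem, hx, hy, h]

lemma not_coll_self (t : Tr n) : ¬ Coll t t := by
  obtain ⟨x, y, h, rfl⟩ := t.exists_eq_mk
  rw [coll_mk_iff, coe_mk, swap_apply_left, swap_apply_right]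
  tauto

lemma wedge_mk (t : Tr n) {x y : Fin (n + 1)} (h : x ≠ y) :
    wedge t (mk x y h) = mk (t.1 x) (t.1 y) (t.1.injective.ne h) := by
  apply Subtype.ext
  have hinv : t.1⁻¹ = t.1 := inv_eq_of_mul_eq_one_left (Equiv.ext (apply_apply t))
  rw [coe_mk, swap_apply_apply, hinv]
  rfl

lemma coll_wedge_and_wedge_wedge {t s : Tr n} (hts : Coll t s) :
    Coll (wedge t s) s ∧ wedge (wedge t s) s = t := by
  have key (x y : Fin (n + 1)) (h : x ≠ y) (hx : t.1 x ≠ x) (hy : t.1 y = y) :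
      Coll (wedge t (mk x y h)) (mk x y h) ∧ wedge (wedge t (mk x y h)) (mk x y h) = t := by
    have hcy : t.1 x ≠ y := fun e => h (by rw [← apply_apply t x, e, hy])
    have hw : wedge t (mk x y h) = mk (t.1 x) y hcy := by rw [wedge_mk]; simp only [hy]
    have hxw : swap (t.1 x) y x = x := swap_apply_of_ne_of_ne hx.symm h
    rw [hw, coll_mk_iff, wedge_mk]
    refine ⟨by simp [hxw, hcy], ?_⟩
    conv_rhs => rw [eq_mk_of_apply_ne hx]
    exact Subtype.ext (by simp [hxw])
  obtain ⟨x, y, h, rfl⟩ := s.exists_eq_mk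
  rcases (coll_mk_iff t h).1 hts with ⟨hx, hy⟩ | ⟨hx, hy⟩
  · exact key x y h hx hy
  · rw [mk_comm]
    exact key y x h.symm hy hx

def movingFixing (x : Fin (n + 1)) (S : Finset (Fin (n + 1))) : Finset (Tr n) :=
  univ.filter fun t => t.1 x ≠ x ∧ ∀ f ∈ S, t.1 f = f

lemma mem_movingFixing {x : Fin (n + 1)} {S : Finset (Fin (n + 1))} {t : Tr n} :
    t ∈ movingFixing x S ↔ t.1 x ≠ x ∧ ∀ f ∈ S, t.1 f = f := by
  simp [movingFixing]

lemma sum_movingFixing {M : Type*} [AddCommMonoid M] {x : Fin (n + 1)}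
    {S : Finset (Fin (n + 1))} (hx : x ∉ S) (g : Fin (n + 1) → M) :
    ∑ t ∈ movingFixing x S, g (t.1 x) = ∑ c ∈ (insert x S)ᶜ, g c := by
  refine Finset.sum_nbij (fun t => t.1 x) ?_ ?_ ?_ fun _ _ => rfl
  · intro t ht
    rw [mem_movingFixing] at ht
    simp only [mem_compl, mem_insert, not_or]
    refine ⟨ht.1, fun hS => ht.1 ?_⟩
    rw [← ht.2 _ hS, apply_apply]
  · intro t ht t' ht' h
    rw [mem_coe, mem_movingFixing] at ht ht'
    rw [eq_mk_of_apply_ne ht.1, eq_mk_of_apply_ne ht'.1]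
    simp only at h
    simp [h]
  · intro c hc
    simp only [coe_compl, coe_insert, Set.mem_compl_iff, Set.mem_insert_iff, mem_coe,
      not_or] at hc
    refine ⟨mk x c (Ne.symm hc.1), ?_, swap_apply_left x c⟩
    rw [mem_coe, mem_movingFixing, coe_mk, swap_apply_left]
    refine ⟨hc.1, fun f hf => swap_apply_of_ne_of_ne ?_ ?_⟩
    · rintro rfl; exact hx hf
    · rintro rfl; exact hc.2 hf

end Tr


def parabolic {n : ℕ} (p : Fin (n + 1)) : Finset (Tr n) := univ.filter fun t => t.1 p = p

noncomputable def parabolicSum {n : ℕ} (p : Fin (n + 1)) : Tr n →₀ F :=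
  ∑ t ∈ parabolic p, single t 1

noncomputable def movingCoeffs {n : ℕ} (p : Fin (n + 1)) :
    (Tr n →₀ F) →ₗ[F] ({b // b ≠ p} → F) :=
  LinearMap.pi fun b => Finsupp.lapply (Tr.mk b.1 p b.2)

section Matsuo

variable {F} {n : ℕ}

lemma pointMul_eq_add (α : F) (t s : Tr n) :
    pointMul F α t s = (if t = s then single s 1 else 0) +
      if Coll t s then (α / 2) • (single t 1 + single s 1 - single (wedge t s) 1) else 0 := by
  by_cases h : t = s
  · subst h; simp [pointMul, Tr.not_coll_self]
  · simp [pointMul, h]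

lemma sum_pointMul_left (α : F) (S : Finset (Tr n)) (s : Tr n) :
    ∑ t ∈ S, pointMul F α t s = (if s ∈ S then single s 1 else 0) +
      (α / 2) • ∑ t ∈ S.filter (Coll · s),
        (single t 1 + single s 1 - single (wedge t s) 1) := by
  simp only [pointMul_eq_add, sum_add_distrib, Finset.sum_ite_eq', Finset.smul_sum, sum_filter,
    smul_ite, smul_zero]

lemma matsuoMul_single_single (α : F) (t s : Tr n) :
    matsuoMul F n α (single t 1) (single s 1) = pointMul F α t s := by
  simp [matsuoMul]

lemma matsuoMul_parabolicSum_single (α : F) (p : Fin (n + 1)) (s : Tr n) :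
    matsuoMul F n α (parabolicSum F p) (single s 1) =
      ∑ t ∈ parabolic p, pointMul F α t s := by
  simp [parabolicSum, matsuoMul_single_single]

lemma mem_parabolic {p : Fin (n + 1)} {t : Tr n} : t ∈ parabolic p ↔ t.1 p = p := by
  simp [parabolic]

lemma wedge_mem_parabolic {p : Fin (n + 1)} {t s : Tr n} (ht : t ∈ parabolic p)
    (hs : s ∈ parabolic p) : wedge t s ∈ parabolic p := by
  rw [mem_parabolic] at *
  simp [wedge, ht, hs]

lemma sum_filter_coll_wedge {M : Type*} [AddCommMonoid M] {p : Fin (n + 1)} {s : Tr n}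
    (hs : s ∈ parabolic p) (g : Tr n → M) :
    ∑ t ∈ (parabolic p).filter (Coll · s), g (wedge t s) =
      ∑ t ∈ (parabolic p).filter (Coll · s), g t := by
  refine Finset.sum_nbij' (wedge · s) (wedge · s) ?_ ?_ ?_ ?_ fun _ _ => rfl <;>
    intro t ht <;> simp only [mem_filter] at ht ⊢
  · exact ⟨wedge_mem_parabolic ht.1 hs, (Tr.coll_wedge_and_wedge_wedge ht.2).1⟩
  · exact ⟨wedge_mem_parabolic ht.1 hs, (Tr.coll_wedge_and_wedge_wedge ht.2).1⟩
  · exact (Tr.coll_wedge_and_wedge_wedge ht.2).2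
  · exact (Tr.coll_wedge_and_wedge_wedge ht.2).2

lemma card_parabolic_filter_coll {p : Fin (n + 1)} {s : Tr n} (hs : s ∈ parabolic p) :
    (#((parabolic p).filter (Coll · s)) : F) = 2 * ((n : F) - 2) := by
  obtain ⟨x, y, h, rfl⟩ := s.exists_eq_mk
  have hp : p ≠ x ∧ p ≠ y := (Tr.mk_apply_eq_self_iff h).1 (mem_parabolic.1 hs)
  have hsplit : (parabolic p).filter (Coll · (Tr.mk x y h)) =
      Tr.movingFixing x {y, p} ∪ Tr.movingFixing y {x, p} := by
    ext t
    simp only [mem_filter, mem_parabolic, Tr.coll_mk_iff, mem_union, Tr.mem_movingFixing,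
      mem_insert, mem_singleton, forall_eq_or_imp, forall_eq]
    tauto
  have hcard (a b : Fin (n + 1)) (hab : a ≠ b) (hap : a ≠ p) (hbp : b ≠ p) :
      (#(Tr.movingFixing a {b, p}) : F) = n - 2 := by
    have hc := card_compl_add_card ({a, b, p} : Finset (Fin (n + 1)))
    rw [Finset.card_eq_three.2 ⟨a, b, p, hab, hap, hbp, rfl⟩, Fintype.card_fin] at hc
    rw [card_eq_sum_ones, Tr.sum_movingFixing (by simp [hab, hap]) (fun _ => 1),
      ← card_eq_sum_ones, eq_sub_iff_add_eq]
    exact_mod_cast congrArg (Nat.cast : ℕ → F)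
      (by omega : #({a, b, p} : Finset (Fin (n + 1)))ᶜ + 2 = n)
  rw [hsplit, card_union_of_disjoint, Nat.cast_add, hcard x y h hp.1.symm hp.2.symm,
    hcard y x h.symm hp.2.symm hp.1.symm]
  · ring
  · refine disjoint_left.2 fun t hx hy => ?_
    rw [Tr.mem_movingFixing] at hx hy
    exact hx.1 (hy.2 x (by simp))

lemma matsuoMul_parabolicSum_single_of_mem (α : F) (h2 : (2 : F) ≠ 0) {p : Fin (n + 1)}
    {s : Tr n} (hs : s ∈ parabolic p) :
    matsuoMul F n α (parabolicSum F p) (single s 1) = (1 + α * ((n : F) - 2)) • single s 1 := by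
  -- the terms `t` and `wedge t s` cancel, since `t ↦ wedge t s` permutes the lines through `s`
  rw [matsuoMul_parabolicSum_single, sum_pointMul_left, if_pos hs, sum_sub_distrib,
    sum_add_distrib, sum_filter_coll_wedge hs (fun t => single t (1 : F)), add_sub_cancel_left,
    sum_const, ← Nat.cast_smul_eq_nsmul F, card_parabolic_filter_coll hs, smul_smul, add_smul,
    one_smul]
  congr 2
  field_simp

lemma single_mk_apply_mk {p a b : Fin (n + 1)} (ha : a ≠ p) (hb : b ≠ p) :
    single (Tr.mk a p ha) (1 : F) (Tr.mk b p hb) = if a = b then 1 else 0 := by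
  simp only [Finsupp.single_apply, Tr.mk_left_inj]

lemma matsuoMul_parabolicSum_mk_apply_mk (α : F) {p x b : Fin (n + 1)} (hx : x ≠ p)
    (hb : b ≠ p) :
    matsuoMul F n α (parabolicSum F p) (single (Tr.mk x p hx) 1) (Tr.mk b p hb) =
      α / 2 * (n * (if x = b then 1 else 0) - 1) := by
  set s := Tr.mk x p hx
  have hs : s ∉ parabolic p := by simpa [s, mem_parabolic] using hx
  have hC : (parabolic p).filter (Coll · s) = Tr.movingFixing x {p} := by
    ext t
    simp only [mem_filter, mem_parabolic, s, Tr.coll_mk_iff, Tr.mem_movingFixing, mem_singleton,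
      forall_eq]
    tauto
  have hterm : ∀ t ∈ Tr.movingFixing x {p},
      (single t 1 + single s 1 - single (wedge t s) 1 : Tr n →₀ F) (Tr.mk b p hb) =
        (if x = b then 1 else 0) - if t.1 x = b then (1 : F) else 0 := by
    intro t ht
    simp only [Tr.mem_movingFixing, mem_singleton, forall_eq] at ht
    have htb : t ≠ Tr.mk b p hb := by
      rintro rfl
      exact ((Tr.mk_apply_eq_self_iff hb).1 ht.2).2 rfl
    simp only [s, Tr.wedge_mk, ht.2, Finsupp.sub_apply, Finsupp.add_apply,
      single_eq_of_ne htb.symm, single_mk_apply_mk, zero_add]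
  have hcard : (#({x, p} : Finset (Fin (n + 1)))ᶜ : F) = n - 1 := by
    have hc := card_compl_add_card ({x, p} : Finset (Fin (n + 1)))
    rw [card_pair hx, Fintype.card_fin] at hc
    have hcF := congrArg (Nat.cast : ℕ → F) hc
    push_cast at hcF
    linear_combination hcF
  rw [matsuoMul_parabolicSum_single, sum_pointMul_left, if_neg hs, zero_add, Finsupp.smul_apply,
    Finsupp.finsetSum_apply, hC, sum_congr rfl hterm, Tr.sum_movingFixing (by simpa using hx)
      (fun c => (if x = b then (1 : F) else 0) - if c = b then 1 else 0),
    sum_sub_distrib, sum_const, Finset.sum_ite_eq', nsmul_eq_mul, hcard, smul_eq_mul]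
  by_cases hxb : x = b
  · subst hxb; simp
  · simp [hxb, hb, Ne.symm hxb]

@[simp]
lemma movingCoeffs_apply (p : Fin (n + 1)) (f : Tr n →₀ F) (b : {b // b ≠ p}) :
    movingCoeffs F p f b = f (Tr.mk b.1 p b.2) := rfl

lemma movingCoeffs_single_of_mem {p : Fin (n + 1)} {s : Tr n} (hs : s ∈ parabolic p) (c : F) :
    movingCoeffs F p (single s c) = 0 := by
  ext b
  rw [movingCoeffs_apply, single_eq_of_ne]
  · rfl
  rintro rfl
  rw [mem_parabolic, Tr.mk_apply_eq_self_iff] at hs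
  exact hs.2 rfl

lemma movingCoeffs_single_mk {p x : Fin (n + 1)} (hx : x ≠ p) :
    movingCoeffs F p (single (Tr.mk x p hx) 1) = Pi.single ⟨x, hx⟩ 1 := by
  ext b
  simp only [movingCoeffs_apply, Finsupp.single_apply, Tr.mk_left_inj]
  simp only [Pi.single_apply, Subtype.ext_iff]
  exact if_congr eq_comm rfl rfl

lemma ker_movingCoeffs (p : Fin (n + 1)) :
    LinearMap.ker (movingCoeffs F p) = Finsupp.supported F F {t : Tr n | t.1 p = p} := by
  ext f
  rw [LinearMap.mem_ker, Finsupp.mem_supported']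
  constructor
  · intro hf t ht
    rw [Tr.eq_mk_of_apply_ne' ht]
    exact congrFun hf ⟨_, ht⟩
  · intro hf
    ext b
    exact hf _ fun h => ((Tr.mk_apply_eq_self_iff b.2).1 h).2 rfl

lemma movingCoeffs_surjective (p : Fin (n + 1)) : Function.Surjective (movingCoeffs F p) := by
  intro v
  refine ⟨∑ b, v b • single (Tr.mk b.1 p b.2) 1, ?_⟩
  simp only [map_sum, map_smul, movingCoeffs_single_mk]
  exact (pi_eq_sum_univ' v).symm

lemma movingCoeffs_comp_matsuoMul_parabolicSum (α : F) (h2 : (2 : F) ≠ 0) (p : Fin (n + 1)) :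
    movingCoeffs F p ∘ₗ matsuoMul F n α (parabolicSum F p) =
      ((α / 2) • completeLaplacian F {b // b ≠ p}) ∘ₗ movingCoeffs F p := by
  ext s b
  simp only [LinearMap.comp_apply, Finsupp.lsingle_apply, LinearMap.smul_apply]
  by_cases hs : s ∈ parabolic p
  · rw [matsuoMul_parabolicSum_single_of_mem α h2 hs, map_smul, movingCoeffs_single_of_mem hs,
      map_zero, smul_zero, smul_zero]
  obtain ⟨x, hx, rfl⟩ : ∃ x, ∃ hx : x ≠ p, s = Tr.mk x p hx :=
    ⟨_, _, Tr.eq_mk_of_apply_ne' (mt mem_parabolic.2 hs)⟩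
  rw [movingCoeffs_apply, matsuoMul_parabolicSum_mk_apply_mk α hx b.2, movingCoeffs_single_mk,
    Pi.smul_apply, completeLaplacian_apply, Finset.sum_pi_single', if_pos (mem_univ _),
    Pi.single_apply, smul_eq_mul]
  simp [Subtype.ext_iff, eq_comm]

end Matsuo

section IdParab

open RatFunc

lemma one_add_X_mul_sub_two_ne_zero (n : ℕ) : 1 + X * ((n : RatFunc ℚ) - 2) ≠ 0 := by
  simpa using C_add_X_mul_C_ne_zero one_ne_zero ((n : ℚ) - 2)

lemma inv_mul_X_div_two_mul_ne_one (n : ℕ) :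
    (1 + X * ((n : RatFunc ℚ) - 2))⁻¹ * (X / 2) * (n : RatFunc ℚ) ≠ 1 := by
  have h := C_add_X_mul_C_ne_zero two_ne_zero ((n : ℚ) - 4)
  simp only [map_sub, map_natCast, map_ofNat] at h
  contrapose! h
  rw [mul_assoc, inv_mul_eq_one₀ (one_add_X_mul_sub_two_ne_zero n)] at h
  linear_combination 2 * h

lemma matsuoMul_idParab (n : ℕ) :
    matsuoMul _ n X (idParab n) =
      (1 + X * ((n : RatFunc ℚ) - 2))⁻¹ • matsuoMul _ n X (parabolicSum _ (Fin.last n)) := by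
  rw [idParab, map_smul]
  rfl

lemma matsuoMul_idParab_of_movingCoeffs_eq_zero {n : ℕ} (f : Tr n →₀ RatFunc ℚ)
    (hf : movingCoeffs _ (Fin.last n) f = 0) : matsuoMul _ n X (idParab n) f = f := by
  rw [← LinearMap.mem_ker, ker_movingCoeffs, supported_eq_span_single] at hf
  refine LinearMap.eqOn_span' (g := LinearMap.id) ?_ hf
  rintro _ ⟨t, ht, rfl⟩
  rw [matsuoMul_idParab, LinearMap.smul_apply,
    matsuoMul_parabolicSum_single_of_mem _ two_ne_zero (mem_parabolic.2 ht), smul_smul,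
    inv_mul_cancel₀ (one_add_X_mul_sub_two_ne_zero n), one_smul, LinearMap.id_apply]

lemma movingCoeffs_comp_matsuoMul_idParab (n : ℕ) :
    movingCoeffs _ (Fin.last n) ∘ₗ matsuoMul _ n X (idParab n) =
      (((1 + X * ((n : RatFunc ℚ) - 2))⁻¹ * (X / 2)) • completeLaplacian _ _) ∘ₗ
        movingCoeffs _ (Fin.last n) := by
  rw [matsuoMul_idParab, LinearMap.comp_smul,
    movingCoeffs_comp_matsuoMul_parabolicSum _ two_ne_zero, LinearMap.smul_comp,
    LinearMap.smul_comp, smul_smul]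

end IdParab

/-- for `n ≥ 3`, over `F = ℚ(α)` the `1`-eigenspace of `ad(u)` on
`M_α(𝒜_n)`, for `u` the identity of the parabolic subalgebra spanned by `T_{n-1}`, is
exactly the span of `T_{n-1}`, and the `0`-eigenspace is `1`-dimensional. -/
theorem eigenspaces_idParab_An (n : ℕ) (hn : 3 ≤ n) :
    Module.End.eigenspace (matsuoMul (RatFunc ℚ) n RatFunc.X (idParab n)) 1 =
        Submodule.span (RatFunc ℚ)
          ((fun t : Tr n => Finsupp.single t (1 : RatFunc ℚ)) ''
            {t : Tr n | t.1 (Fin.last n) = Fin.last n}) ∧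
      Module.finrank (RatFunc ℚ)
          (Module.End.eigenspace (matsuoMul (RatFunc ℚ) n RatFunc.X (idParab n)) 0) =
        1 := by
  have hπ := movingCoeffs_comp_matsuoMul_idParab n
  have hT := matsuoMul_idParab_of_movingCoeffs_eq_zero (n := n)
  constructor
  · rw [eigenspace_one_eq_ker_of_comp_eq hπ hT
      (eigenspace_smul_completeLaplacian_one (by simpa using inv_mul_X_div_two_mul_ne_one n)),
      ker_movingCoeffs, supported_eq_span_single]
  · have hk : (1 + RatFunc.X * ((n : RatFunc ℚ) - 2))⁻¹ * (RatFunc.X / 2) ≠ 0 :=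
      mul_ne_zero (inv_ne_zero (one_add_X_mul_sub_two_ne_zero n))
        (div_ne_zero RatFunc.X_ne_zero two_ne_zero)
    rw [finrank_eigenspace_eq_of_comp_eq hπ hT (movingCoeffs_surjective _) zero_ne_one,
      Module.End.eigenspace_zero, LinearMap.ker_smul _ _ hk,
      finrank_ker_completeLaplacian (by simpa using (by omega : n ≠ 0))]
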